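/- arXiv:2504.03233 — 2 statements merged into one kernel-verified Lean document; each statement's English description precedes it below -/
import Mathlib

section
/- With the hyperrectangle uncertainty set derived from a sensitivity matrix L (i.e., |fᵢ(x,u) − fᵢ(x′,u)| ≤ Σⱼ L_{ij}|xⱼ − x′ⱼ|), the data-driven Hamiltonian has closed form Ĥ(x,p) = max over data points k of (pᵀv^k − Σᵢ |pᵢ|·(Σⱼ L_{ij}|xⱼ − x^k_j|)), and Ĥ(x,p) ≤ H(x,p) = sup_{u∈U} pᵀ f(x,u). -/
/-!
A linear function `w ↦ ⟪p, w⟫` is minimised over the box `|wᵢ| ≤ rᵢ` coordinatewise, at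
`wᵢ = -sign(pᵢ) rᵢ`, with minimum `-∑ |pᵢ| rᵢ`; this gives the closed form. For the bound, the
sensitivity condition puts `f(x, uᵏ)` in the box of radius `L|x - xᵏ|` around `vᵏ`, so the `k`-th
term is at most `⟪p, f(x, uᵏ)⟫ ≤ H(x, p)`.
-/

open Finset

section Box

variable {ι : Type*} [Fintype ι]

theorem neg_sum_abs_mul_le_inner_of_abs_le (p w : EuclideanSpace ℝ ι) {r : ι → ℝ}
    (hw : ∀ i, |w i| ≤ r i) : -∑ i, |p i| * r i ≤ inner ℝ p w := by
  rw [PiLp.inner_apply, ← sum_neg_distrib]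
  refine sum_le_sum fun i _ => ?_
  calc -(|p i| * r i) ≤ -|p i * w i| := by
        rw [abs_mul]; exact neg_le_neg (mul_le_mul_of_nonneg_left (hw i) (abs_nonneg _))
    _ ≤ p i * w i := neg_abs_le _
    _ = inner ℝ (p i) (w i) := by simp [mul_comm]

theorem inner_sub_sum_abs_mul_le_inner (p v v' : EuclideanSpace ℝ ι) {r : ι → ℝ}
    (h : ∀ i, |v' i - v i| ≤ r i) : inner ℝ p v - ∑ i, |p i| * r i ≤ inner ℝ p v' := by
  have := neg_sum_abs_mul_le_inner_of_abs_le p (v' - v) (by simpa using h)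
  rw [inner_sub_right] at this
  linarith

theorem isLeast_inner_add_box (p v : EuclideanSpace ℝ ι) {r : ι → ℝ} (hr : ∀ i, 0 ≤ r i) :
    IsLeast ((fun w => inner ℝ p (v + w)) '' {w : EuclideanSpace ℝ ι | ∀ i, |w i| ≤ r i})
      (inner ℝ p v - ∑ i, |p i| * r i) := by
  refine ⟨⟨WithLp.toLp 2 fun i => -(SignType.sign (p i) : ℝ) * r i, fun i => ?_, ?_⟩, ?_⟩
  · rcases lt_trichotomy (p i) 0 with h | h | h <;> simp [h, abs_of_nonneg (hr i), hr i]
  · simp only [inner_add_right, PiLp.inner_apply, sub_eq_add_neg, ← sum_neg_distrib]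
    congr 1
    refine sum_congr rfl fun i _ => ?_
    simp [mul_right_comm _ (r i), sign_mul_self]
  · rintro _ ⟨w, hw, rfl⟩
    exact inner_sub_sum_abs_mul_le_inner p v (v + w) (by simpa using hw)

end Box

/-- Closed form of the hyperrectangle DDH under a sensitivity-matrix
Lipschitz condition, and the lower-bound property. -/
theorem ddh_rect_closed_form
    (n m N : ℕ) (hN : 0 < N)
    (f : EuclideanSpace ℝ (Fin n) → (Fin m → ℝ) → EuclideanSpace ℝ (Fin n))
    (U : Set (Fin m → ℝ)) (L : Matrix (Fin n) (Fin n) ℝ) (hL : ∀ i j, 0 ≤ L i j)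
    (hLip : ∀ x x' : EuclideanSpace ℝ (Fin n), ∀ u ∈ U, ∀ i,
      |f x u i - f x' u i| ≤ ∑ j, L i j * |x j - x' j|)
    (xs : Fin N → EuclideanSpace ℝ (Fin n)) (us : Fin N → (Fin m → ℝ))
    (vs : Fin N → EuclideanSpace ℝ (Fin n))
    (hu : ∀ k, us k ∈ U) (hv : ∀ k, vs k = f (xs k) (us k))
    (x p : EuclideanSpace ℝ (Fin n))
    (hH : BddAbove ((fun u => (inner ℝ p (f x u) : ℝ)) '' U)) :
    (⨆ k : Fin N, sInf ((fun w => (inner ℝ p (vs k + w) : ℝ)) ''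
        {w : EuclideanSpace ℝ (Fin n) | ∀ i, |w i| ≤ ∑ j, L i j * |x j - xs k j|}))
      = (⨆ k : Fin N, ((inner ℝ p (vs k) : ℝ) - ∑ i, |p i| * ∑ j, L i j * |x j - xs k j|)) ∧
    (⨆ k : Fin N, ((inner ℝ p (vs k) : ℝ) - ∑ i, |p i| * ∑ j, L i j * |x j - xs k j|))
      ≤ sSup ((fun u => (inner ℝ p (f x u) : ℝ)) '' U) := by
  have : Nonempty (Fin N) := ⟨⟨0, hN⟩⟩
  refine ⟨iSup_congr fun k => (isLeast_inner_add_box p (vs k) fun i => ?_).csInf_eq, ?_⟩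
  · exact sum_nonneg fun j _ => mul_nonneg (hL i j) (abs_nonneg _)
  refine ciSup_le fun k => le_csSup_of_le hH ⟨us k, hu k, rfl⟩ ?_
  refine inner_sub_sum_abs_mul_le_inner p (vs k) (f x (us k)) fun i => ?_
  rw [hv k]
  exact hLip x (xs k) (us k) (hu k) i
end

section
/- Let Ĥ be the data-driven Hamiltonian built from a valid uncertainty set, and let i* attain the outer maximum at (x,p), i.e., i* = argmaxᵢ min_{ŵ ∈ E(x;x^i)} pᵀ(v^i + ŵ). Then the control u^{i*} from the dataset satisfies Ĥ(x,p) ≤ pᵀ f(x, u^{i*}); that is, playing the data-indexed control realizes at least the worst-case data-driven Hamiltonian value. -/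
theorem IsCompact.sInf_image_le_of_continuous {α β : Type*} [TopologicalSpace α]
    [ConditionallyCompleteLinearOrder β] [TopologicalSpace β] [ClosedIicTopology β] {K : Set α}
    (hK : IsCompact K) {g : α → β} (hg : Continuous g) {w : α} (hw : w ∈ K) :
    sInf (g '' K) ≤ g w :=
  csInf_le (hK.image hg).bddBelow (Set.mem_image_of_mem g hw)

theorem ciSup_le_of_argmax_le {ι α : Type*} [ConditionallyCompleteLattice α] {F : ι → α}
    {istar : ι} (hmax : ∀ i, F i ≤ F istar) {c : α} (hc : F istar ≤ c) : ⨆ i, F i ≤ c :=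
  haveI : Nonempty ι := ⟨istar⟩
  ciSup_le fun i => (hmax i).trans hc

theorem ddh_argmax_control_realizes_value_general
    (n m N : ℕ)
    (f : EuclideanSpace ℝ (Fin n) → (Fin m → ℝ) → EuclideanSpace ℝ (Fin n))
    (xs : Fin N → EuclideanSpace ℝ (Fin n)) (us : Fin N → (Fin m → ℝ))
    (vs : Fin N → EuclideanSpace ℝ (Fin n))
    (E : EuclideanSpace ℝ (Fin n) → EuclideanSpace ℝ (Fin n) → Set (EuclideanSpace ℝ (Fin n)))
    (hE : ∀ i x, f x (us i) - vs i ∈ E x (xs i))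
    (hcomp : ∀ i x, IsCompact (E x (xs i)) ∧ (E x (xs i)).Nonempty)
    (x p : EuclideanSpace ℝ (Fin n)) (istar : Fin N)
    (hargmax : ∀ i, sInf ((fun w => (inner ℝ p (vs i + w) : ℝ)) '' E x (xs i))
        ≤ sInf ((fun w => (inner ℝ p (vs istar + w) : ℝ)) '' E x (xs istar))) :
    (⨆ i : Fin N, sInf ((fun w => (inner ℝ p (vs i + w) : ℝ)) '' E x (xs i)))
      ≤ (inner ℝ p (f x (us istar)) : ℝ) := by
  refine ciSup_le_of_argmax_le hargmax ?_
  -- the realized disturbance `f x (us istar) - vs istar` is one of the candidates in the inner minimum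
  have h := (hcomp istar x).1.sInf_image_le_of_continuous
    (g := fun w => inner ℝ p (vs istar + w)) (by fun_prop) (hE istar x)
  rwa [add_sub_cancel] at h

/-- The data-indexed control realizing the outer argmax of the DDH
achieves at least the DDH value. -/
theorem ddh_argmax_control_realizes_value
    (n m N : ℕ) (hN : 0 < N)
    (f : EuclideanSpace ℝ (Fin n) → (Fin m → ℝ) → EuclideanSpace ℝ (Fin n))
    (xs : Fin N → EuclideanSpace ℝ (Fin n)) (us : Fin N → (Fin m → ℝ))
    (vs : Fin N → EuclideanSpace ℝ (Fin n))
    (E : EuclideanSpace ℝ (Fin n) → EuclideanSpace ℝ (Fin n) → Set (EuclideanSpace ℝ (Fin n)))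
    (hv : ∀ i, vs i = f (xs i) (us i))
    (hE : ∀ i x, f x (us i) - vs i ∈ E x (xs i))
    (hcomp : ∀ i x, IsCompact (E x (xs i)) ∧ (E x (xs i)).Nonempty)
    (x p : EuclideanSpace ℝ (Fin n)) (istar : Fin N)
    (hargmax : ∀ i, sInf ((fun w => (inner ℝ p (vs i + w) : ℝ)) '' E x (xs i))
        ≤ sInf ((fun w => (inner ℝ p (vs istar + w) : ℝ)) '' E x (xs istar))) :
    (⨆ i : Fin N, sInf ((fun w => (inner ℝ p (vs i + w) : ℝ)) '' E x (xs i)))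
      ≤ (inner ℝ p (f x (us istar)) : ℝ) :=
  ddh_argmax_control_realizes_value_general n m N f xs us vs E hE hcomp x p istar hargmax
end
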